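/- arXiv:2206.07525 — 2 statements merged into one kernel-verified Lean document; each statement's English description precedes it below -/
import Mathlib

section
/- Let H be a graph and C a shortest odd cycle of H. If X and Y are odd cycles in H, and X_1 = E(X) \ E(C), Y_1 = E(Y) \ E(C), then |Y| ≤ |X| + 2|Y_1 \ X_1|, where |X| and |Y| denote the lengths of the cycles. -/
/-!
Let `S = E(C) ∆ E(X) ∆ E(Y)`. Each of the three cycles meets every vertex in an even number of
edges, so `S` does too, and `|S|` is odd. A longest trail inside such an edge set is closed (a
trail with distinct ends can be extended at its start), so `S` can be stripped of closed trails
until an odd one remains; that odd closed walk contains an odd cycle. By minimality of `C`,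
`|C| ≤ |S|`. Counting membership in `E(C)`, `E(X)`, `E(Y)` element by element gives
`|Y| + |S| + 2|(E(C) ∩ E(X)) \ E(Y)| = |C| + |X| + 2|Y₁ \ X₁|`, and the claim follows.
-/

open Finset SimpleGraph
open scoped symmDiff

namespace Finset

variable {α : Type*} [DecidableEq α]

theorem card_symmDiff_add_two_mul_card_inter (s t : Finset α) :
    #(s ∆ t) + 2 * #(s ∩ t) = #s + #t := by
  have := card_sdiff_add_card_inter s t
  have := card_sdiff_add_card_inter t s
  rw [Finset.symmDiff_def, card_union_of_disjoint disjoint_sdiff_sdiff, inter_comm t s] at *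
  omega

theorem even_card_symmDiff_iff (s t : Finset α) : Even #(s ∆ t) ↔ (Even #s ↔ Even #t) := by
  rw [← Nat.even_add, ← card_symmDiff_add_two_mul_card_inter, Nat.even_add]
  simp

theorem filter_symmDiff (p : α → Prop) [DecidablePred p] (s t : Finset α) :
    (s ∆ t).filter p = s.filter p ∆ t.filter p := by
  ext
  simp only [mem_filter, mem_symmDiff]
  tauto

theorem card_add_card_symmDiff_symmDiff (A B D : Finset α) :
    #D + #(A ∆ B ∆ D) + 2 * #((A ∩ B) \ D) = #A + #B + 2 * #((D \ A) \ (B \ A)) := by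
  set U := A ∪ B ∪ D
  have hcard : ∀ s ⊆ U, #s = ∑ x ∈ U, if x ∈ s then 1 else 0 := fun s hs => by
    rw [sum_boole, filter_mem_eq_inter, inter_eq_right.2 hs, Nat.cast_id]
  rw [hcard D, hcard (A ∆ B ∆ D), hcard ((A ∩ B) \ D), hcard A, hcard B,
    hcard ((D \ A) \ (B \ A)), mul_sum, mul_sum, ← sum_add_distrib, ← sum_add_distrib,
    ← sum_add_distrib, ← sum_add_distrib]
  · refine sum_congr rfl fun x _ => ?_
    by_cases x ∈ A <;> by_cases x ∈ B <;> by_cases x ∈ D <;> simp [*, mem_symmDiff]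
  all_goals
    intro x
    simp only [U, mem_union, mem_inter, mem_sdiff, mem_symmDiff]
    tauto

end Finset

namespace SimpleGraph

variable {V : Type*} {G : SimpleGraph V}

theorem Walk.exists_isCycle_odd_length_le {u : V} (p : G.Walk u u) (hp : Odd p.length) :
    ∃ (w : V) (c : G.Walk w w), c.IsCycle ∧ Odd c.length ∧ c.length ≤ p.length := by
  induction hn : p.length using Nat.strong_induction_on generalizing u with
  | _ n ih =>
  subst hn
  cases p with
  | nil => simp at hp
  | @cons _ v _ h q =>
    by_cases hq : q.IsPath
    · refine ⟨u, cons h q, (cons_isCycle_iff q h).2 ⟨hq, fun he => ?_⟩, hp, le_rfl⟩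
      rw [length_cons, hq.length_eq_one_of_mem_edges (Sym2.eq_swap ▸ he)] at hp
      exact Nat.not_odd_iff_even.2 even_two hp
    -- `q` runs through a nontrivial closed subwalk `w`; cutting it out of `cons h q` leaves a
    -- second closed walk, and one of the two is odd.
    obtain ⟨z, w, ⟨r₁, r₂, rfl⟩, hw⟩ :
        ∃ (z : V) (w : G.Walk z z), w.IsSubwalk q ∧ ¬w.Nil := by
      simpa [isPath_iff_isSubwalk_imp_nil] using hq
    have hw : 0 < w.length := Nat.pos_of_ne_zero (mt length_eq_zero_iff.1 hw)
    simp only [length_cons, length_append] at hp ih ⊢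
    rcases Nat.even_or_odd w.length with hwe | hwo
    · have hodd : Odd (cons h (r₁.append r₂)).length := by
        rw [Nat.even_iff] at hwe
        rw [Nat.odd_iff] at hp ⊢
        simp only [length_cons, length_append]
        omega
      obtain ⟨x, d, hd, hdodd, hdle⟩ := ih _ (by simp only [length_cons, length_append]; omega)
        _ hodd rfl
      exact ⟨x, d, hd, hdodd, by simp only [length_cons, length_append] at hdle; omega⟩
    · obtain ⟨x, d, hd, hdodd, hdle⟩ := ih _ (by omega) w hwo rfl
      exact ⟨x, d, hd, hdodd, by omega⟩

variable [DecidableEq V]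

def IsEvenEdgeSet (S : Finset (Sym2 V)) : Prop :=
  ∀ v, Even #{e ∈ S | v ∈ e}

theorem IsEvenEdgeSet.symmDiff {S T : Finset (Sym2 V)} (hS : IsEvenEdgeSet S)
    (hT : IsEvenEdgeSet T) : IsEvenEdgeSet (S ∆ T) := fun v => by
  rw [filter_symmDiff, even_card_symmDiff_iff]
  exact iff_of_true (hS v) (hT v)

theorem IsEvenEdgeSet.sdiff {S T : Finset (Sym2 V)} (hS : IsEvenEdgeSet S)
    (hT : IsEvenEdgeSet T) (hTS : T ⊆ S) : IsEvenEdgeSet (S \ T) := by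
  rw [← symmDiff_of_le hTS]
  exact hT.symmDiff hS

namespace Walk

theorem IsTrail.card_edges_toFinset {u v : V} {p : G.Walk u v} (hp : p.IsTrail) :
    #p.edges.toFinset = p.length := by
  rw [List.toFinset_card_of_nodup hp.edges_nodup, length_edges]

theorem IsTrail.length_le_card {u v : V} {p : G.Walk u v} (hp : p.IsTrail)
    {S : Finset (Sym2 V)} (hpS : p.edges.toFinset ⊆ S) : p.length ≤ #S :=
  hp.card_edges_toFinset ▸ card_le_card hpS

theorem IsTrail.even_card_filter_mem_edges_iff {u v : V} {p : G.Walk u v} (hp : p.IsTrail)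
    (x : V) : Even #{e ∈ p.edges.toFinset | x ∈ e} ↔ (u ≠ v → x ≠ u ∧ x ≠ v) := by
  rw [hp.edges_nodup.card_eq_countP, hp.even_countP_edges_iff]

theorem IsTrail.isEvenEdgeSet {u : V} {p : G.Walk u u} (hp : p.IsTrail) :
    IsEvenEdgeSet p.edges.toFinset := fun x =>
  (hp.even_card_filter_mem_edges_iff x).2 (absurd rfl)

theorem IsTrail.exists_mem_notMem_edges {S : Finset (Sym2 V)} (hS : IsEvenEdgeSet S) {u v : V}
    {p : G.Walk u v} (hp : p.IsTrail) (hpS : p.edges.toFinset ⊆ S) (huv : u ≠ v) :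
    ∃ w, s(w, u) ∈ S ∧ s(w, u) ∉ p.edges := by
  have hodd : ¬Even #{e ∈ p.edges.toFinset | u ∈ e} := by
    simp [hp.even_card_filter_mem_edges_iff, huv]
  obtain ⟨e, he, hep⟩ := exists_of_ssubset <|
    (filter_subset_filter _ hpS).ssubset_of_ne fun h => hodd (h ▸ hS u)
  obtain ⟨heS, hue⟩ := mem_filter.1 he
  obtain ⟨w, rfl⟩ := Sym2.mem_iff_exists.1 hue
  refine ⟨w, Sym2.eq_swap ▸ heS, fun h => hep ?_⟩
  exact mem_filter.2 ⟨List.mem_toFinset.2 (Sym2.eq_swap ▸ h), hue⟩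

end Walk

theorem exists_isTrail_pos_length_of_isEvenEdgeSet {S : Finset (Sym2 V)} (hS : IsEvenEdgeSet S)
    (hSG : ↑S ⊆ G.edgeSet) (hne : S.Nonempty) :
    ∃ (u : V) (p : G.Walk u u), p.IsTrail ∧ 0 < p.length ∧ p.edges.toFinset ⊆ S := by
  classical
  let P : ℕ → Prop := fun n => ∃ (u v : V) (p : G.Walk u v),
    p.IsTrail ∧ p.edges.toFinset ⊆ S ∧ p.length = n
  have hP_le : ∀ n, P n → n ≤ #S := by
    rintro _ ⟨u, v, p, hp, hpS, rfl⟩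
    exact hp.length_le_card hpS
  obtain ⟨e, he⟩ := hne
  induction e using Sym2.ind with
  | _ a b =>
  have hP1 : P 1 := ⟨a, b, (G.mem_edgeSet.1 (hSG he)).toWalk, by simp, by simpa, rfl⟩
  obtain ⟨u, v, p, hp, hpS, hpL⟩ := Nat.findGreatest_spec (hP_le 1 hP1) hP1
  have hL := Nat.le_findGreatest (hP_le 1 hP1) hP1
  by_cases huv : u = v
  · subst huv
    exact ⟨u, p, hp, by omega, hpS⟩
  obtain ⟨w, hwS, hwp⟩ := hp.exists_mem_notMem_edges hS hpS huv
  have hP : P (p.length + 1) := ⟨w, v, Walk.cons (G.mem_edgeSet.1 (hSG hwS)) p, hp.cons _ hwp,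
    by simp [insert_subset_iff, hwS, hpS], rfl⟩
  have := Nat.le_findGreatest (hP_le _ hP) hP
  omega

theorem exists_isTrail_odd_length_of_isEvenEdgeSet {S : Finset (Sym2 V)} (hS : IsEvenEdgeSet S)
    (hSG : ↑S ⊆ G.edgeSet) (hodd : Odd #S) :
    ∃ (u : V) (p : G.Walk u u), p.IsTrail ∧ Odd p.length ∧ p.edges.toFinset ⊆ S := by
  induction hn : #S using Nat.strong_induction_on generalizing S with
  | _ n ih =>
  obtain ⟨u, p, hp, hp0, hpS⟩ :=
    exists_isTrail_pos_length_of_isEvenEdgeSet hS hSG (card_pos.1 hodd.pos)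
  by_cases hpodd : Odd p.length
  · exact ⟨u, p, hp, hpodd, hpS⟩
  have hle : p.length ≤ n := hn ▸ hp.length_le_card hpS
  have hcard : #(S \ p.edges.toFinset) = n - p.length := by
    rw [card_sdiff_of_subset hpS, hp.card_edges_toFinset, hn]
  obtain ⟨w, q, hq, hqodd, hqS⟩ := ih _ (by omega) (hS.sdiff hp.isEvenEdgeSet hpS)
    (subset_trans (by simp) hSG) (hcard ▸ Nat.Odd.sub_even hle (hn ▸ hodd)
      (Nat.not_odd_iff_even.1 hpodd)) hcard
  exact ⟨w, q, hq, hqodd, hqS.trans sdiff_subset⟩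

theorem exists_isCycle_odd_length_le_card {S : Finset (Sym2 V)} (hS : IsEvenEdgeSet S)
    (hSG : ↑S ⊆ G.edgeSet) (hodd : Odd #S) :
    ∃ (u : V) (c : G.Walk u u), c.IsCycle ∧ Odd c.length ∧ c.length ≤ #S := by
  obtain ⟨u, p, hp, hpodd, hpS⟩ := exists_isTrail_odd_length_of_isEvenEdgeSet hS hSG hodd
  obtain ⟨w, c, hc, hcodd, hcp⟩ := p.exists_isCycle_odd_length_le hpodd
  exact ⟨w, c, hc, hcodd, hcp.trans (hp.length_le_card hpS)⟩

end SimpleGraph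

/-- If `C` is a shortest odd cycle of `H` and `X, Y` are odd cycles of `H`,
then `|Y| ≤ |X| + 2|Y₁ \ X₁|` where `X₁ = E(X) \ E(C)`, `Y₁ = E(Y) \ E(C)`. -/
theorem odd_cycle_length_le {V : Type*} [DecidableEq V] (H : SimpleGraph V)
    (v : V) (c : H.Walk v v) (hc : c.IsCycle) (hcodd : Odd c.length)
    (hmin : ∀ (w : V) (d : H.Walk w w), d.IsCycle → Odd d.length →
      c.length ≤ d.length)
    (a b : V) (x : H.Walk a a) (y : H.Walk b b)
    (hx : x.IsCycle) (hxodd : Odd x.length)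
    (hy : y.IsCycle) (hyodd : Odd y.length) :
    y.length ≤ x.length +
      2 * ((y.edges.toFinset \ c.edges.toFinset) \
            (x.edges.toFinset \ c.edges.toFinset)).card := by
  set A := c.edges.toFinset
  set B := x.edges.toFinset
  set D := y.edges.toFinset
  have hA : #A = c.length := hc.isTrail.card_edges_toFinset
  have hB : #B = x.length := hx.isTrail.card_edges_toFinset
  have hD : #D = y.length := hy.isTrail.card_edges_toFinset
  have hS : IsEvenEdgeSet (A ∆ B ∆ D) :=
    (hc.isTrail.isEvenEdgeSet.symmDiff hx.isTrail.isEvenEdgeSet).symmDiff hy.isTrail.isEvenEdgeSet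
  have hSG : ↑(A ∆ B ∆ D) ⊆ H.edgeSet := by
    intro e he
    have : e ∈ A ∪ B ∪ D :=
      (symmDiff_subset_union.trans (union_subset_union_left symmDiff_subset_union)) he
    simp only [A, B, D, mem_union, List.mem_toFinset] at this
    rcases this with (h | h) | h <;> exact Walk.edges_subset_edgeSet _ h
  have hodd : Odd #(A ∆ B ∆ D) := by
    rw [← hA] at hcodd
    rw [← hB] at hxodd
    rw [← hD] at hyodd
    simp only [← Nat.not_even_iff_odd, even_card_symmDiff_iff] at hcodd hxodd hyodd ⊢
    tauto
  obtain ⟨w, d, hd, hdodd, hdS⟩ := exists_isCycle_odd_length_le_card hS hSG hodd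
  have := hmin w d hd hdodd
  have := card_add_card_symmDiff_symmDiff A B D
  omega
end

section
/- Fix r ≥ 1. Let H be a C_{2r+1}-free graph and v a vertex of H such that every vertex of H is within graph distance r of v. Then the chromatic number of H is at most 4r. -/
/-!
Fix a breadth-first search tree from `v` and order every distance layer lexicographically by
ancestor chains, i.e. in the depth-first order of the tree, so that lexicographic intervals of a
layer are unions of subtrees. Take a lexicographically increasing path `f 0, …, f n` in layer `i`.
If two of its vertices `s` steps apart have the same ancestor at depth `j` but different ancestors
at depth `j + 1`, the subpath between them and the two tree branches form a cycle of length
`s + 2 (i - j)`, which is `2 r + 1` for `s = 2 (r - i) + 2 j + 1`. Hence in a `C_{2r+1}`-free graph,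
by induction on `j`, all vertices of the path share their ancestor at depth `j` as long as
`2 (r - i) + 2 j ≤ n + 1`; at `j = i` this forces `n ≤ 2 r - 2`. By Gallai–Roy every layer is
`(2 r - 1)`-colourable, and as edges between layers join consecutive layers, disjoint palettes for
even and odd layers colour the graph with `2 (2 r - 1) ≤ 4 r` colours.
-/

/-- `H` contains no cycle of length `n`. -/
def CFree {V : Type*} (H : SimpleGraph V) (n : ℕ) : Prop :=
  ∀ (v : V) (c : H.Walk v v), c.IsCycle → c.length ≠ n

open Set Function

theorem Pi.eqOn_Iic_of_toLex_le_of_toLex_le {ι β : Type*} [LinearOrder ι]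
    [WellFoundedLT ι] [LinearOrder β] {a b c : ι → β} {i : ι}
    (hab : toLex a ≤ toLex b) (hbc : toLex b ≤ toLex c) (hac : EqOn a c (Iic i)) :
    EqOn a b (Iic i) := by
  intro k
  induction k using WellFoundedLT.induction with
  | _ k ih =>
    intro hk
    have hbelow : ∀ l < k, a l = b l := fun l hl => ih l hl (le_trans hl.le hk)
    have hab' : a k ≤ b k := apply_le_of_toLex hab hbelow
    have hbc' : b k ≤ c k := apply_le_of_toLex hbc fun l hl =>
      (hbelow l hl).symm.trans (hac (le_trans hl.le hk))
    exact le_antisymm hab' (hbc'.trans (hac hk).ge)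

namespace SimpleGraph

variable {V : Type*}

/-- Gallai–Roy, for the acyclic orientation `x → y` of the edges with `key x < key y`. -/
theorem colorable_of_forall_increasing_walk_length_le {α : Type*} [LinearOrder α]
    (G : SimpleGraph V) (key : V → α) (hkey : ∀ ⦃x y⦄, G.Adj x y → key x ≠ key y) (m : ℕ)
    (h : ∀ (n : ℕ) (f : ℕ → V),
      (∀ t < n, G.Adj (f t) (f (t + 1)) ∧ key (f t) < key (f (t + 1))) → n ≤ m) :
    G.Colorable (m + 1) := by
  classical
  let EndsAt (x : V) (n : ℕ) : Prop := ∃ f : ℕ → V,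
    (∀ t < n, G.Adj (f t) (f (t + 1)) ∧ key (f t) < key (f (t + 1))) ∧ f n = x
  have ends_at_zero (x : V) : EndsAt x 0 := ⟨fun _ => x, by simp, rfl⟩
  have ends_at_succ {x y : V} {n : ℕ} (hxy : G.Adj x y) (hk : key x < key y) :
      EndsAt x n → EndsAt y (n + 1) := by
    rintro ⟨f, hf, rfl⟩
    refine ⟨update f (n + 1) y, fun t ht => ?_, by simp⟩
    rcases Nat.lt_succ_iff_lt_or_eq.mp ht with ht | rfl
    · simpa [update_of_ne (show t ≠ n + 1 by omega),
        update_of_ne (show t + 1 ≠ n + 1 by omega)] using hf t ht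
    · simpa [update_of_ne (show t ≠ t + 1 by omega)] using And.intro hxy hk
  let color (x : V) : ℕ := Nat.findGreatest (EndsAt x) m
  have color_lt {x y : V} (hxy : G.Adj x y) (hk : key x < key y) : color x < color y := by
    obtain ⟨f, hf, hfy⟩ :=
      ends_at_succ hxy hk (Nat.findGreatest_spec (Nat.zero_le m) (ends_at_zero x))
    exact Nat.le_findGreatest (h _ f hf) ⟨f, hf, hfy⟩
  refine (colorable_iff_exists_bdd_nat_coloring _).2
    ⟨Coloring.mk color fun {x y} hxy => ?_, fun x => Nat.lt_succ_of_le (Nat.findGreatest_le m)⟩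
  rcases (hkey hxy).lt_or_gt with hk | hk
  · exact (color_lt hxy hk).ne
  · exact (color_lt hxy.symm hk).ne'

theorem exists_isCycle_length_eq_of_injOn {G : SimpleGraph V} {F : ℕ → V} {N : ℕ}
    (hN : 3 ≤ N) (hadj : ∀ t < N, G.Adj (F t) (F (t + 1))) (hclosed : F N = F 0)
    (hinj : InjOn F (Ioc 0 N)) : ∃ c : G.Walk (F 0) (F 0), c.IsCycle ∧ c.length = N := by
  let l := (List.range N).map fun t => F (t + 1)
  have hne : l ≠ [] := by simp only [ne_eq, List.map_eq_nil_iff, List.range_eq_nil, l]; omega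
  have hchain : l.IsChain G.Adj := by
    rw [List.isChain_map, List.isChain_range]
    exact fun t ht => hadj (t + 1) (by omega)
  have hhead : l.head hne = F 1 := by simp [l, List.head_map]
  have hlast : l.getLast hne = F 0 := by
    simpa [l, List.getLast_map, Nat.sub_add_cancel (by omega : 1 ≤ N)] using hclosed
  let p := (Walk.ofSupport l hne hchain).copy hhead hlast
  have hp : p.IsPath := by
    rw [Walk.isPath_copy, Walk.isPath_def, Walk.support_ofSupport]
    refine List.Nodup.map_on (fun a ha b hb hab => ?_) List.nodup_range
    simp only [List.mem_range] at ha hb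
    have := hinj (⟨by omega, by omega⟩ : a + 1 ∈ Ioc 0 N) (⟨by omega, by omega⟩ : b + 1 ∈ Ioc 0 N)
      hab
    omega
  have hlen : p.length + 1 = N := by
    simp only [Walk.length_copy, Walk.length_ofSupport, List.length_map, List.length_range, p, l]
    omega
  refine ⟨Walk.cons (hadj 0 (by omega)) p, ?_, (Walk.length_cons _ _).trans hlen⟩
  rw [Walk.isCycle_iff_isPath_tail_and_le_length]
  simp only [Walk.tail_cons, Walk.length_cons]
  exact ⟨(Walk.isPath_copy _ _ _).2 hp, by omega⟩

theorem Reachable.exists_adj_dist_add_one_eq {G : SimpleGraph V} {v w : V} (hw : G.Reachable v w)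
    (hpos : 0 < G.dist v w) : ∃ u, G.Adj w u ∧ G.dist v u + 1 = G.dist v w := by
  obtain ⟨p, hp⟩ := hw.exists_walk_length_eq_dist
  have hnil : ¬p.Nil := by rw [← Walk.length_eq_zero_iff]; omega
  refine ⟨p.penultimate, (p.adj_penultimate hnil).symm, ?_⟩
  have hle : G.dist v p.penultimate ≤ p.length - 1 := by
    simpa only [Walk.length_dropLast] using dist_le p.dropLast
  rcases (p.adj_penultimate hnil).diff_dist_adj (u := v) with h | h | h <;> omega

variable (H : SimpleGraph V) (v : V)

noncomputable def bfsParent (w : V) : V :=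
  @Classical.epsilon V ⟨w⟩ fun u => H.Adj w u ∧ H.dist v u + 1 = H.dist v w

/-- The ancestor of `x` at depth `j` in the breadth-first search tree; it is `x` itself when
`H.dist v x ≤ j`. -/
noncomputable def bfsAncestor (x : V) (j : ℕ) : V :=
  (H.bfsParent v)^[H.dist v x - j] x

noncomputable def bfsKey (x : V) : Lex (ℕ → V) :=
  toLex (H.bfsAncestor v x)

variable {H v}

theorem bfsParent_spec {w : V} (hw : H.Reachable v w) (hpos : 0 < H.dist v w) :
    H.Adj w (H.bfsParent v w) ∧ H.dist v (H.bfsParent v w) + 1 = H.dist v w :=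
  Classical.epsilon_spec (hw.exists_adj_dist_add_one_eq hpos)

theorem dist_iterate_bfsParent (hv : ∀ w, H.Reachable v w) (x : V) {t : ℕ}
    (ht : t ≤ H.dist v x) : H.dist v ((H.bfsParent v)^[t] x) = H.dist v x - t := by
  induction t with
  | zero => rfl
  | succ t ih =>
    rw [iterate_succ_apply']
    have := (bfsParent_spec (hv _) (by rw [ih (by omega)]; omega)).2
    omega

theorem dist_bfsAncestor (hv : ∀ w, H.Reachable v w) {x : V} {j : ℕ} (hj : j ≤ H.dist v x) :
    H.dist v (H.bfsAncestor v x j) = j := by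
  rw [bfsAncestor, dist_iterate_bfsParent hv x (Nat.sub_le _ _)]
  omega

theorem bfsAncestor_of_dist_le {x : V} {j : ℕ} (hj : H.dist v x ≤ j) :
    H.bfsAncestor v x j = x := by
  rw [bfsAncestor, Nat.sub_eq_zero_of_le hj, iterate_zero_apply]

theorem bfsAncestor_zero (hv : ∀ w, H.Reachable v w) (x : V) : H.bfsAncestor v x 0 = v :=
  ((hv _).dist_eq_zero_iff.mp (dist_bfsAncestor hv (Nat.zero_le _))).symm

theorem adj_bfsAncestor_succ (hv : ∀ w, H.Reachable v w) {x : V} {j : ℕ}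
    (hj : j + 1 ≤ H.dist v x) : H.Adj (H.bfsAncestor v x (j + 1)) (H.bfsAncestor v x j) := by
  have hpar := (bfsParent_spec (hv _) (by rw [dist_bfsAncestor hv hj]; omega)).1
  rwa [bfsAncestor, ← iterate_succ_apply' (H.bfsParent v), show (H.dist v x - (j + 1)).succ =
    H.dist v x - j by omega, ← bfsAncestor] at hpar

theorem bfsAncestor_bfsAncestor (hv : ∀ w, H.Reachable v w) {x : V} {j k : ℕ} (hjk : j ≤ k)
    (hk : k ≤ H.dist v x) : H.bfsAncestor v (H.bfsAncestor v x k) j = H.bfsAncestor v x j := by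
  rw [bfsAncestor, dist_bfsAncestor hv hk, bfsAncestor, bfsAncestor, ← iterate_add_apply,
    show k - j + (H.dist v x - k) = H.dist v x - j by omega]

theorem bfsAncestor_eq_of_le (hv : ∀ w, H.Reachable v w) {x y : V} {j k : ℕ} (hjk : j ≤ k)
    (hx : k ≤ H.dist v x) (hy : k ≤ H.dist v y)
    (h : H.bfsAncestor v x k = H.bfsAncestor v y k) :
    H.bfsAncestor v x j = H.bfsAncestor v y j := by
  rw [← bfsAncestor_bfsAncestor hv hjk hx, h, bfsAncestor_bfsAncestor hv hjk hy]

theorem bfsKey_injective : Injective (H.bfsKey v) := fun x y h => by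
  have := congrFun h (max (H.dist v x) (H.dist v y))
  rwa [bfsKey, bfsKey, Pi.toLex_apply, Pi.toLex_apply, bfsAncestor_of_dist_le (le_max_left _ _),
    bfsAncestor_of_dist_le (le_max_right _ _)] at this

theorem bfsAncestor_eq_of_bfsKey_le_of_le [LinearOrder V] (hv : ∀ w, H.Reachable v w)
    {x y z : V} {k : ℕ} (hx : k ≤ H.dist v x) (hy : k ≤ H.dist v y)
    (hxz : H.bfsKey v x ≤ H.bfsKey v z) (hzy : H.bfsKey v z ≤ H.bfsKey v y)
    (h : H.bfsAncestor v x k = H.bfsAncestor v y k) :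
    H.bfsAncestor v x k = H.bfsAncestor v z k :=
  Pi.eqOn_Iic_of_toLex_le_of_toLex_le hxz hzy
    (fun _ hj => bfsAncestor_eq_of_le hv hj hx hy h) (le_refl k)

variable (H v) in
def layerGraph : SimpleGraph V where
  Adj x y := H.Adj x y ∧ H.dist v x = H.dist v y
  symm := ⟨fun _ _ h => ⟨h.1.symm, h.2.symm⟩⟩
  loopless := ⟨fun _ h => H.loopless.irrefl _ h.1⟩

theorem colorable_two_mul_of_layerGraph {k : ℕ} (h : (H.layerGraph v).Colorable k) :
    H.Colorable (2 * k) := by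
  obtain ⟨c⟩ := h
  let parity (x : V) : Fin 2 := ⟨H.dist v x % 2, Nat.mod_lt _ two_pos⟩
  have := (Coloring.mk (G := H) (fun x => (parity x, c x)) fun {x y} hxy => ?_).colorable
  · simpa using this
  by_cases hd : H.dist v x = H.dist v y
  · exact fun he => c.valid ⟨hxy, hd⟩ (Prod.ext_iff.mp he).2
  · have hpar : H.dist v x % 2 ≠ H.dist v y % 2 := by
      rcases hxy.diff_dist_adj (u := v) with h | h | h <;> omega
    exact fun he => hpar (congrArg Fin.val (Prod.ext_iff.mp he).1)

variable (H v) in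
/-- The closed walk `f 0, …, f s` along layer `i`, then up the tree from `f s` to depth `j`, then
down the tree to `f 0`; it has length `s + 2 (i - j)`. -/
noncomputable def layerCycle (f : ℕ → V) (s i j t : ℕ) : V :=
  if t ≤ s then f t
  else if t ≤ s + (i - j) then H.bfsAncestor v (f s) (i + s - t)
  else H.bfsAncestor v (f 0) (t - s - (i - j) + j)

section layerCycle

variable {f : ℕ → V} {s i j : ℕ}

theorem layerCycle_of_le {t : ℕ} (ht : t ≤ s) : H.layerCycle v f s i j t = f t :=
  if_pos ht

theorem layerCycle_of_lt_of_le {t : ℕ} (h₁ : s < t) (h₂ : t ≤ s + (i - j)) :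
    H.layerCycle v f s i j t = H.bfsAncestor v (f s) (i + s - t) := by
  rw [layerCycle, if_neg h₁.not_ge, if_pos h₂]

theorem layerCycle_of_lt {t : ℕ} (ht : s + (i - j) < t) :
    H.layerCycle v f s i j t = H.bfsAncestor v (f 0) (t - s - (i - j) + j) := by
  rw [layerCycle, if_neg (by omega), if_neg ht.not_ge]

theorem layerCycle_adj (hv : ∀ w, H.Reachable v w) (hji : j < i)
    (hlayer : ∀ t ≤ s, H.dist v (f t) = i) (hadj : ∀ t < s, H.Adj (f t) (f (t + 1)))
    (hj : H.bfsAncestor v (f 0) j = H.bfsAncestor v (f s) j) :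
    ∀ t < s + 2 * (i - j), H.Adj (H.layerCycle v f s i j t) (H.layerCycle v f s i j (t + 1)) := by
  have h0 := hlayer 0 (Nat.zero_le _)
  have hs := hlayer s le_rfl
  intro t ht
  rcases lt_trichotomy t s with hts | rfl | hts
  · rw [layerCycle_of_le hts.le, layerCycle_of_le hts]
    exact hadj t hts
  · rw [layerCycle_of_le le_rfl, layerCycle_of_lt_of_le (by omega) (by omega),
      show i + t - (t + 1) = i - 1 by omega]
    have := adj_bfsAncestor_succ hv (x := f t) (j := i - 1) (by omega)
    rwa [show i - 1 + 1 = i by omega, bfsAncestor_of_dist_le hs.le] at this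
  rcases lt_trichotomy t (s + (i - j)) with htq | rfl | htq
  · rw [layerCycle_of_lt_of_le hts htq.le, layerCycle_of_lt_of_le (by omega) htq,
      show i + s - t = i + s - (t + 1) + 1 by omega]
    exact adj_bfsAncestor_succ hv (by omega)
  · rw [layerCycle_of_lt_of_le hts le_rfl, layerCycle_of_lt (by omega),
      show i + s - (s + (i - j)) = j by omega, hj.symm,
      show s + (i - j) + 1 - s - (i - j) + j = j + 1 by omega]
    exact (adj_bfsAncestor_succ hv (by omega)).symm
  · rw [layerCycle_of_lt htq, layerCycle_of_lt (by omega),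
      show t + 1 - s - (i - j) + j = t - s - (i - j) + j + 1 by omega]
    exact (adj_bfsAncestor_succ hv (by omega)).symm

theorem layerCycle_injOn (hv : ∀ w, H.Reachable v w) (hji : j < i)
    (hlayer : ∀ t ≤ s, H.dist v (f t) = i) (hinj : InjOn f (Iic s))
    (hne : H.bfsAncestor v (f 0) (j + 1) ≠ H.bfsAncestor v (f s) (j + 1)) :
    InjOn (H.layerCycle v f s i j) (Ioc 0 (s + 2 * (i - j))) := by
  have hmid {t : ℕ} (h₁ : s < t) (h₂ : t ≤ s + (i - j)) :
      H.dist v (H.layerCycle v f s i j t) = i + s - t := by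
    rw [layerCycle_of_lt_of_le h₁ h₂, dist_bfsAncestor hv (by rw [hlayer s le_rfl]; omega)]
  have htop {t : ℕ} (h₁ : s + (i - j) < t) (h₂ : t ≤ s + 2 * (i - j)) :
      H.dist v (H.layerCycle v f s i j t) = t - s - (i - j) + j := by
    rw [layerCycle_of_lt h₁, dist_bfsAncestor hv (by rw [hlayer 0 (Nat.zero_le _)]; omega)]
  intro a ha b hb hab
  simp only [mem_Ioc] at ha hb
  wlog hle : a ≤ b generalizing a b
  · exact (this hab.symm hb ha (by omega)).symm
  have hd := congrArg (H.dist v) hab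
  rcases le_or_gt b s with hbs | hbs
  · rw [layerCycle_of_le (hle.trans hbs), layerCycle_of_le hbs] at hab
    exact hinj (show a ≤ s by omega) (show b ≤ s from hbs) hab
  rcases le_or_gt b (s + (i - j)) with hbq | hbq
  · rcases le_or_gt a s with has | has
    · rw [layerCycle_of_le has, hlayer a has, hmid hbs hbq] at hd
      omega
    · rw [hmid has (by omega), hmid hbs hbq] at hd
      omega
  rcases le_or_gt a s with has | has
  · rw [layerCycle_of_le has, hlayer a has, htop hbq hb.2] at hd
    rw [layerCycle_of_le has, layerCycle_of_lt hbq, show b - s - (i - j) + j = i by omega,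
      ← hlayer 0 (Nat.zero_le _), bfsAncestor_of_dist_le le_rfl] at hab
    have := hinj (show a ≤ s from has) (show 0 ≤ s by omega) hab
    omega
  rcases le_or_gt a (s + (i - j)) with haq | haq
  · rw [hmid has haq, htop hbq hb.2] at hd
    rw [layerCycle_of_lt_of_le has haq, layerCycle_of_lt hbq, ← hd] at hab
    exact absurd (bfsAncestor_eq_of_le hv (by omega) (by rw [hlayer 0 (Nat.zero_le _)]; omega)
      (by rw [hlayer s le_rfl]; omega) hab.symm) hne
  · rw [htop haq (by omega), htop hbq hb.2] at hd
    omega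

theorem exists_isCycle_of_bfsAncestor_succ_ne (hv : ∀ w, H.Reachable v w) (hji : j < i)
    (hlayer : ∀ t ≤ s, H.dist v (f t) = i) (hadj : ∀ t < s, H.Adj (f t) (f (t + 1)))
    (hinj : InjOn f (Iic s)) (hj : H.bfsAncestor v (f 0) j = H.bfsAncestor v (f s) j)
    (hne : H.bfsAncestor v (f 0) (j + 1) ≠ H.bfsAncestor v (f s) (j + 1)) :
    ∃ (u : V) (c : H.Walk u u), c.IsCycle ∧ c.length = s + 2 * (i - j) := by
  have hs : s ≠ 0 := by rintro rfl; exact hne rfl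
  have hclosed : H.layerCycle v f s i j (s + 2 * (i - j)) = H.layerCycle v f s i j 0 := by
    rw [layerCycle_of_le (Nat.zero_le _), layerCycle_of_lt (by omega),
      show s + 2 * (i - j) - s - (i - j) + j = i by omega, ← hlayer 0 (Nat.zero_le _),
      bfsAncestor_of_dist_le le_rfl]
  exact ⟨_, exists_isCycle_length_eq_of_injOn (by omega) (layerCycle_adj hv hji hlayer hadj hj)
    hclosed (layerCycle_injOn hv hji hlayer hinj hne)⟩

end layerCycle

section LinearOrder

variable [LinearOrder V] {r i n : ℕ} {f : ℕ → V}

theorem bfsAncestor_eq_of_strictMonoOn (hH : CFree H (2 * r + 1)) (hv : ∀ w, H.Reachable v w)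
    (hir : i ≤ r) (hlayer : ∀ t ≤ n, H.dist v (f t) = i)
    (hadj : ∀ t < n, H.Adj (f t) (f (t + 1))) (hmono : StrictMonoOn (H.bfsKey v ∘ f) (Iic n))
    {j : ℕ} (hji : j ≤ i) (hjn : 2 * (r - i) + 2 * j ≤ n + 1) :
    ∀ a ≤ n, H.bfsAncestor v (f a) j = H.bfsAncestor v (f 0) j := by
  induction j with
  | zero => simp [bfsAncestor_zero hv]
  | succ j ih =>
    -- this makes the cycle of `exists_isCycle_of_bfsAncestor_succ_ne` have length `2 r + 1`
    set s := 2 * (r - i) + 2 * j + 1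
    have hwindow (a : ℕ) (ha : a + s ≤ n) :
        H.bfsAncestor v (f a) (j + 1) = H.bfsAncestor v (f (a + s)) (j + 1) := by
      by_contra hne
      have hinj : InjOn (fun t => f (a + t)) (Iic s) := fun x hx y hy hxy => by
        simp only [mem_Iic] at hx hy
        have := hmono.injOn.of_comp (show a + x ≤ n by omega) (show a + y ≤ n by omega) hxy
        omega
      have hj : H.bfsAncestor v (f a) j = H.bfsAncestor v (f (a + s)) j :=
        (ih (by omega) (by omega) a (by omega)).trans (ih (by omega) (by omega) (a + s) ha).symm
      obtain ⟨u, c, hc, hlen⟩ := exists_isCycle_of_bfsAncestor_succ_ne (f := fun t => f (a + t))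
        hv (by omega) (fun t _ => hlayer _ (by omega)) (fun t _ => hadj _ (by omega)) hinj hj hne
      exact hH u c hc (by omega)
    have hinside (a c : ℕ) (hac : a ≤ c) (hca : c ≤ a + s) (ha : a + s ≤ n) :
        H.bfsAncestor v (f a) (j + 1) = H.bfsAncestor v (f c) (j + 1) :=
      bfsAncestor_eq_of_bfsKey_le_of_le hv (by rw [hlayer a (by omega)]; omega)
        (by rw [hlayer (a + s) ha]; omega)
        (hmono.monotoneOn (show a ≤ n by omega) (show c ≤ n by omega) hac)
        (hmono.monotoneOn (show c ≤ n by omega) (show a + s ≤ n from ha) hca) (hwindow a ha)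
    -- `b` and `b + 1` both lie in the window `[w, w + s]` with `w = min b (n - s)`
    have hstep (b : ℕ) (hb : b < n) :
        H.bfsAncestor v (f (b + 1)) (j + 1) = H.bfsAncestor v (f b) (j + 1) :=
      (hinside _ _ (by omega) (by omega) (by omega)).symm.trans
        (hinside (min b (n - s)) b (by omega) (by omega) (by omega))
    intro a ha
    induction a with
    | zero => rfl
    | succ a iha => exact (hstep a ha).trans (iha (by omega))

theorem length_le_of_increasing_layerGraph_walk (hH : CFree H (2 * r + 1))
    (hv : ∀ w, H.Reachable v w) (hr : ∀ w, H.dist v w ≤ r)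
    (hf : ∀ t < n, (H.layerGraph v).Adj (f t) (f (t + 1)) ∧
      H.bfsKey v (f t) < H.bfsKey v (f (t + 1))) :
    n ≤ 2 * r - 2 := by
  by_contra! hn
  have hlayer : ∀ t ≤ n, H.dist v (f t) = H.dist v (f 0) := by
    intro t ht
    induction t with
    | zero => rfl
    | succ t ih => exact (hf t ht).1.2.symm.trans (ih (by omega))
  have hmono : StrictMonoOn (H.bfsKey v ∘ f) (Iic n) :=
    strictMonoOn_Iic_of_lt_succ fun t ht => (hf t ht).2
  have hir := hr (f 0)
  have hshare := bfsAncestor_eq_of_strictMonoOn hH hv hir hlayer (fun t ht => (hf t ht).1.1)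
    hmono le_rfl (by omega) n le_rfl
  rw [bfsAncestor_of_dist_le (hlayer n le_rfl).le, bfsAncestor_of_dist_le le_rfl] at hshare
  have := hmono.injOn.of_comp (show n ≤ n from le_rfl) (show 0 ≤ n by omega) hshare
  omega

end LinearOrder

theorem layerGraph_colorable {r : ℕ} (hH : CFree H (2 * r + 1)) (hv : ∀ w, H.Reachable v w)
    (hr : ∀ w, H.dist v w ≤ r) :
    (H.layerGraph v).Colorable (2 * r - 2 + 1) := by
  let : LinearOrder V := IsWellOrder.linearOrder WellOrderingRel
  exact colorable_of_forall_increasing_walk_length_le _ (H.bfsKey v)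
    (fun _ _ (hxy : (H.layerGraph v).Adj _ _) => bfsKey_injective.ne hxy.1.ne) _
    fun _ _ hf => length_le_of_increasing_layerGraph_walk hH hv hr hf

end SimpleGraph

/-- A `C_{2r+1}`-free graph of radius at most `r` from a center `v` has
chromatic number at most `4r`. -/
theorem colorable_of_radius_le {V : Type*} (r : ℕ) (hr : 1 ≤ r)
    (H : SimpleGraph V) (hH : CFree H (2 * r + 1))
    (v : V) (hv : ∀ w : V, H.Reachable v w ∧ H.dist v w ≤ r) :
    H.Colorable (4 * r) :=
  (SimpleGraph.colorable_two_mul_of_layerGraph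
    (SimpleGraph.layerGraph_colorable hH (fun w => (hv w).1) (fun w => (hv w).2))).mono
    (by omega)
end
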